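/- arXiv:2602.08515 — 3 statements merged into one kernel-verified Lean document; each statement's English description precedes it below -/
import Mathlib

section
/- If σ and σ' are differentiable on ℝ, then for all x t : ℝ, the second partial derivative of the network output with respect to the spatial variable, deriv (deriv (fun s ↦ ũ s t)) x, equals ∑ k, (σ'' (h2 k x t) * (∑ j, σ' (h1 j x t) * W1 0 j * W2 j k)^2 + σ' (h2 k x t) * (∑ j, σ'' (h1 j x t) * (W1 0 j)^2 * W2 j k)) * W3 k. -/
theorem deriv_deriv_eq_of_hasDerivAt {𝕜 F : Type*} [NontriviallyNormedField 𝕜] [NormedAddCommGroup F]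
    [NormedSpace 𝕜 F] {f f' : 𝕜 → F} {f'' : F} {x : 𝕜}
    (hf : ∀ y, HasDerivAt f (f' y) y) (hf' : HasDerivAt f' f'' x) :
    deriv (deriv f) x = f'' := by
  rw [show deriv f = f' from funext fun y => (hf y).deriv]
  exact hf'.deriv

theorem hasDerivAt_sum_comp_mul {𝕜 ι : Type*} [NontriviallyNormedField 𝕜] [Fintype ι]
    {σ : 𝕜 → 𝕜} {g : ι → 𝕜 → 𝕜} {g' : ι → 𝕜} {x : 𝕜} (hσ : ∀ i, DifferentiableAt 𝕜 σ (g i x))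
    (hg : ∀ i, HasDerivAt (g i) (g' i) x) (w : ι → 𝕜) :
    HasDerivAt (fun s => ∑ i, σ (g i s) * w i) (∑ i, deriv σ (g i x) * g' i * w i) x :=
  HasDerivAt.fun_sum fun i _ => ((hσ i).hasDerivAt.comp x (hg i)).mul_const (w i)

theorem stmt_2 (m1 m2 : ℕ) (σ : ℝ → ℝ)
    (hσ : Differentiable ℝ σ) (hσ' : Differentiable ℝ (deriv σ))
    (W1 : Fin 2 → Fin m1 → ℝ) (B1 : Fin m1 → ℝ)
    (W2 : Fin m1 → Fin m2 → ℝ) (B2 : Fin m2 → ℝ)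
    (W3 : Fin m2 → ℝ) (B3 : ℝ)
    (h1 : Fin m1 → ℝ → ℝ → ℝ)
    (hh1 : h1 = fun j x t => x * W1 0 j + t * W1 1 j + B1 j)
    (h2 : Fin m2 → ℝ → ℝ → ℝ)
    (hh2 : h2 = fun k x t => (∑ j, σ (h1 j x t) * W2 j k) + B2 k)
    (u : ℝ → ℝ → ℝ)
    (hu : u = fun x t => (∑ k, σ (h2 k x t) * W3 k) + B3) :
    ∀ x t : ℝ, deriv (deriv (fun s => u s t)) x =
      ∑ k, (deriv (deriv σ) (h2 k x t) * (∑ j, deriv σ (h1 j x t) * W1 0 j * W2 j k) ^ 2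
        + deriv σ (h2 k x t) * (∑ j, deriv (deriv σ) (h1 j x t) * (W1 0 j) ^ 2 * W2 j k)) * W3 k := by
  intro x t
  set D : Fin m2 → ℝ → ℝ := fun k y => ∑ j, deriv σ (h1 j y t) * W1 0 j * W2 j k
  have dh1 (j : Fin m1) (y : ℝ) : HasDerivAt (fun s => h1 j s t) (W1 0 j) y := by
    subst hh1
    exact ((hasDerivAt_mul_const (W1 0 j)).add_const _).add_const _
  have dh2 (k : Fin m2) (y : ℝ) : HasDerivAt (fun s => h2 k s t) (D k y) y := by
    subst hh2
    exact (hasDerivAt_sum_comp_mul (fun j => hσ _) (fun j => dh1 j y) _).add_const _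
  have du (y : ℝ) : HasDerivAt (fun s => u s t) (∑ k, deriv σ (h2 k y t) * D k y * W3 k) y := by
    subst hu
    exact (hasDerivAt_sum_comp_mul (fun k => hσ _) (fun k => dh2 k y) _).add_const _
  have dD (k : Fin m2) : HasDerivAt (D k)
      (∑ j, deriv (deriv σ) (h1 j x t) * W1 0 j ^ 2 * W2 j k) x :=
    (HasDerivAt.fun_sum fun j _ =>
      (((hσ' _).hasDerivAt.comp x (dh1 j x)).mul_const (W1 0 j)).mul_const (W2 j k)).congr_deriv
      (Finset.sum_congr rfl fun j _ => by ring)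
  rw [deriv_deriv_eq_of_hasDerivAt du (HasDerivAt.fun_sum fun k _ =>
    (((hσ' _).hasDerivAt.comp x (dh2 k x)).mul (dD k)).mul_const (W3 k))]
  exact Finset.sum_congr rfl fun k _ => by simp only [D, Function.comp_apply]; ring
end

section
/- Suppose σ is differentiable on ℝ. For each k0 : Fin m2 and all x t : ℝ, viewing the network output as a function of the output-layer weight s replacing W3 k0 (all other parameters fixed), the derivative with respect to s of the time derivative of the network output satisfies deriv (fun s ↦ deriv (fun τ ↦ (∑ k, σ (h2 k x τ) * Function.update W3 k0 s k) + B3) t) (W3 k0) = σ' (h2 k0 x t) * (∑ j, σ' (h1 j x t) * W1 1 j * W2 j k0). -/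
/-!
The second layer and the output both have the shape `τ ↦ ∑ j, σ (g j τ) * w j + b`, so the
chain rule, applied layer by layer, shows that the time derivative of the output is a linear
form in `W3`; its derivative in the weight `W3 k0` is the `k0`-th coefficient.
-/

open Finset

variable {𝕜 ι : Type*} [NontriviallyNormedField 𝕜] [Fintype ι]

theorem hasDerivAt_sum_mul_update [DecidableEq ι] (c w : ι → 𝕜) (i : ι) (s : 𝕜) :
    HasDerivAt (fun s => ∑ k, c k * Function.update w i s k) (c i) s := by
  have hsplit : (fun s => ∑ k, c k * Function.update w i s k) =
      fun s => c i * s + ∑ k ∈ univ.erase i, c k * w k := by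
    funext s
    rw [← add_sum_erase _ _ (mem_univ i), Function.update_self]
    congr 1
    refine sum_congr rfl fun k hk => ?_
    rw [Function.update_of_ne (ne_of_mem_erase hk)]
  rw [hsplit]
  simpa using ((hasDerivAt_id s).const_mul (c i)).add_const (∑ k ∈ univ.erase i, c k * w k)

theorem hasDerivAt_sum_comp_mul_add {σ : 𝕜 → 𝕜} {g : ι → 𝕜 → 𝕜} {g' : ι → 𝕜} {t : 𝕜}
    (hσ : ∀ j, DifferentiableAt 𝕜 σ (g j t)) (hg : ∀ j, HasDerivAt (g j) (g' j) t)
    (w : ι → 𝕜) (b : 𝕜) :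
    HasDerivAt (fun τ => ∑ j, σ (g j τ) * w j + b) (∑ j, deriv σ (g j t) * g' j * w j) t :=
  (HasDerivAt.fun_sum fun j _ => ((hσ j).hasDerivAt.comp t (hg j)).mul_const (w j)).add_const b

theorem stmt_12 (m1 m2 : ℕ) (σ : ℝ → ℝ) (hσ : Differentiable ℝ σ)
    (W1 : Fin 2 → Fin m1 → ℝ) (B1 : Fin m1 → ℝ)
    (W2 : Fin m1 → Fin m2 → ℝ) (B2 : Fin m2 → ℝ)
    (W3 : Fin m2 → ℝ) (B3 : ℝ)
    (h1 : Fin m1 → ℝ → ℝ → ℝ)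
    (hh1 : h1 = fun j x t => x * W1 0 j + t * W1 1 j + B1 j)
    (h2 : Fin m2 → ℝ → ℝ → ℝ)
    (hh2 : h2 = fun k x t => (∑ j, σ (h1 j x t) * W2 j k) + B2 k) :
    ∀ (k0 : Fin m2) (x t : ℝ),
      deriv (fun s => deriv
          (fun τ => (∑ k, σ (h2 k x τ) * Function.update W3 k0 s k) + B3) t) (W3 k0) =
        deriv σ (h2 k0 x t) * (∑ j, deriv σ (h1 j x t) * W1 1 j * W2 j k0) := by
  intro k0 x t
  have hd1 (j : Fin m1) : HasDerivAt (fun τ => h1 j x τ) (W1 1 j) t := by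
    subst hh1
    simpa using (((hasDerivAt_id t).mul_const (W1 1 j)).const_add (x * W1 0 j)).add_const (B1 j)
  have hd2 (k : Fin m2) : HasDerivAt (fun τ => h2 k x τ)
      (∑ j, deriv σ (h1 j x t) * W1 1 j * W2 j k) t := by
    subst hh2
    exact hasDerivAt_sum_comp_mul_add (fun j => hσ _) hd1 (W2 · k) (B2 k)
  have hinner (s : ℝ) :
      deriv (fun τ => (∑ k, σ (h2 k x τ) * Function.update W3 k0 s k) + B3) t =
        ∑ k, deriv σ (h2 k x t) * (∑ j, deriv σ (h1 j x t) * W1 1 j * W2 j k) *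
          Function.update W3 k0 s k :=
    (hasDerivAt_sum_comp_mul_add (fun k => hσ _) hd2 _ B3).deriv
  simp_rw [hinner]
  exact (hasDerivAt_sum_mul_update _ W3 k0 _).deriv
end

section
/- Suppose σ and σ' are differentiable on ℝ. For each k0 : Fin m2 and all x t : ℝ, the derivative with respect to the second-layer bias B2 k0 of the time derivative of the network output satisfies deriv (fun s ↦ deriv (fun τ ↦ (∑ k, σ ((∑ j, σ (h1 j x τ) * W2 j k) + Function.update B2 k0 s k) * W3 k) + B3) t) (B2 k0) = σ'' (h2 k0 x t) * (∑ j, σ' (h1 j x t) * W1 1 j * W2 j k0) * W3 k0. -/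
/-!
Differentiating in `t` with the chain rule twice gives
`∂ₜũ = ∑ k, σ'(h2 k) * (∑ j, σ'(h1 j) * W1 1 j * W2 j k) * W3 k`, where the inner sums do not
depend on `B2`. Only the `k0`-th summand depends on `B2 k0`, through `σ'(h2 k0)`, so differentiating
in `B2 k0` replaces `σ'` by `σ''` in that one term.
-/

open Finset

theorem hasDerivAt_layer {ι : Type*} [Fintype ι] {σ : ℝ → ℝ} {f : ι → ℝ → ℝ} {f' W : ι → ℝ}
    {b t : ℝ} (hσ : ∀ j, DifferentiableAt ℝ σ (f j t)) (hf : ∀ j, HasDerivAt (f j) (f' j) t) :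
    HasDerivAt (fun τ => (∑ j, σ (f j τ) * W j) + b) (∑ j, deriv σ (f j t) * f' j * W j) t :=
  (HasDerivAt.fun_sum fun j _ => ((hσ j).hasDerivAt.comp t (hf j)).mul_const (W j)).add_const b

theorem hasDerivAt_sum_update {ι : Type*} [Fintype ι] [DecidableEq ι] {φ : ι → ℝ → ℝ}
    {b : ι → ℝ} {i : ι} {φ' : ℝ} (hφ : HasDerivAt (φ i) φ' (b i)) :
    HasDerivAt (fun s => ∑ k, φ k (Function.update b i s k)) φ' (b i) := by
  have hsplit : (fun s => ∑ k, φ k (Function.update b i s k)) =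
      fun s => φ i s + ∑ k ∈ univ.erase i, φ k (b k) := by
    funext s
    rw [← add_sum_erase _ _ (mem_univ i), Function.update_self]
    congr 1
    exact sum_congr rfl fun k hk => by rw [Function.update_of_ne (ne_of_mem_erase hk)]
  rw [hsplit]
  exact hφ.add_const _

theorem stmt_18 (m1 m2 : ℕ) (σ : ℝ → ℝ)
    (hσ : Differentiable ℝ σ) (hσ' : Differentiable ℝ (deriv σ))
    (W1 : Fin 2 → Fin m1 → ℝ) (B1 : Fin m1 → ℝ)
    (W2 : Fin m1 → Fin m2 → ℝ) (B2 : Fin m2 → ℝ)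
    (W3 : Fin m2 → ℝ) (B3 : ℝ)
    (h1 : Fin m1 → ℝ → ℝ → ℝ)
    (hh1 : h1 = fun j x t => x * W1 0 j + t * W1 1 j + B1 j)
    (h2 : Fin m2 → ℝ → ℝ → ℝ)
    (hh2 : h2 = fun k x t => (∑ j, σ (h1 j x t) * W2 j k) + B2 k) :
    ∀ (k0 : Fin m2) (x t : ℝ),
      deriv (fun s => deriv (fun τ =>
          (∑ k, σ ((∑ j, σ (h1 j x τ) * W2 j k) + Function.update B2 k0 s k) * W3 k) + B3) t)
        (B2 k0) =
        deriv (deriv σ) (h2 k0 x t) * (∑ j, deriv σ (h1 j x t) * W1 1 j * W2 j k0) * W3 k0 := by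
  subst hh2
  intro k0 x t
  set c : Fin m2 → ℝ := fun k => ∑ j, σ (h1 j x t) * W2 j k
  set D : Fin m2 → ℝ := fun k => ∑ j, deriv σ (h1 j x t) * W1 1 j * W2 j k
  have hh1' : ∀ j, HasDerivAt (h1 j x) (W1 1 j) t := fun j => by
    subst hh1
    simpa using ((hasDerivAt_id t).mul_const (W1 1 j)).const_add (x * W1 0 j) |>.add_const (B1 j)
  have hdt : ∀ s, HasDerivAt (fun τ =>
      (∑ k, σ ((∑ j, σ (h1 j x τ) * W2 j k) + Function.update B2 k0 s k) * W3 k) + B3)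
      (∑ k, deriv σ (c k + Function.update B2 k0 s k) * D k * W3 k) t := fun s =>
    hasDerivAt_layer (fun _ => hσ _) fun k => hasDerivAt_layer (fun _ => hσ _) hh1'
  have hdB : HasDerivAt (fun y => deriv σ (c k0 + y) * D k0 * W3 k0)
      (deriv (deriv σ) (c k0 + B2 k0) * D k0 * W3 k0) (B2 k0) := by
    simpa using (((hσ' _).hasDerivAt.comp _ ((hasDerivAt_id _).const_add (c k0))).mul_const
      (D k0)).mul_const (W3 k0)
  rw [funext fun s => (hdt s).deriv]
  exact (hasDerivAt_sum_update (φ := fun k y => deriv σ (c k + y) * D k * W3 k) hdB).deriv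
end
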